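/- For every M ≥ 1 and every n ≥ 1, the set C_n is a closed convex cone in the real vector space of Hermitian 2M×2M complex matrices, and C_{n+1} ⊆ C_n. -/

import Mathlib

open Matrix
open scoped ComplexOrder

noncomputable section

/-- The condition `|z|² P + z Q + z̄ Qᴴ + R ≥ 0` for all `z ∈ ℂ`. -/
def QuadPos (M : ℕ) (P Q R : Matrix (Fin M) (Fin M) ℂ) : Prop :=
  ∀ z : ℂ,
    ((z * (starRingEnd ℂ) z) • P + z • Q + ((starRingEnd ℂ) z) • Qᴴ + R).PosSemidef

/-- The `2M × 2M` block appearing at distance `k = j − i ≥ 0` from the diagonal in the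
matrix `𝒟(X₀, …, Xₙ; P, Q, R)`, where `X_{−i} := −Xᵢᴴ`:
`[[P, X₀], [−X₀, R]]` for `k = 0`; `[[0, Qᴴ/2 + X_{−1}], [Qᴴ/2 − X_{−1}, 0]]` for
`k = 1`; `[[0, X_{−k}], [−X_{−k}, 0]]` for `k ≥ 2`. -/
def DEntry (M : ℕ) (X : ℕ → Matrix (Fin M) (Fin M) ℂ)
    (P Q R : Matrix (Fin M) (Fin M) ℂ) (k : ℕ) :
    Matrix (Fin M ⊕ Fin M) (Fin M ⊕ Fin M) ℂ :=
  if k = 0 then fromBlocks P (X 0) (-(X 0)) R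
  else if k = 1 then
    fromBlocks 0 ((1 / 2 : ℂ) • Qᴴ + (-(X 1)ᴴ)) ((1 / 2 : ℂ) • Qᴴ - (-(X 1)ᴴ)) 0
  else fromBlocks 0 (-(X k)ᴴ) ((X k)ᴴ) 0

/-- The matrix `𝒟(X₀, …, Xₙ; P, Q, R)`: the `(n+1) × (n+1)` Hermitian block Toeplitz
matrix with `2M × 2M` blocks whose `(i, j)` block for `i ≤ j` is `DEntry ... (j − i)`,
and whose `(j, i)` block for `i < j` is the conjugate transpose of the `(i, j)` block. -/
def DMat (M n : ℕ) (X : ℕ → Matrix (Fin M) (Fin M) ℂ)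
    (P Q R : Matrix (Fin M) (Fin M) ℂ) :
    Matrix (Fin (n + 1) × (Fin M ⊕ Fin M)) (Fin (n + 1) × (Fin M ⊕ Fin M)) ℂ :=
  Matrix.of fun p q =>
    if p.1.val ≤ q.1.val then DEntry M X P Q R (q.1.val - p.1.val) p.2 q.2
    else (DEntry M X P Q R (p.1.val - q.1.val))ᴴ p.2 q.2

/-- The cone `C_n` of matrices `σ = [[P, Q], [Qᴴ, R]]` for which there exist
`X₀, …, Xₙ` with `X₀ᴴ = −X₀` such that `𝒟(X₀, …, Xₙ; P, Q, R) ≥ 0`. -/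
def CSet (M n : ℕ) : Set (Matrix (Fin M ⊕ Fin M) (Fin M ⊕ Fin M) ℂ) :=
  {σ | ∃ (P Q R : Matrix (Fin M) (Fin M) ℂ) (X : ℕ → Matrix (Fin M) (Fin M) ℂ),
    σ = fromBlocks P Q Qᴴ R ∧ (X 0)ᴴ = -(X 0) ∧ (DMat M n X P Q R).PosSemidef}

/-!
`C_n` is the image of the cone of positive semidefinite matrices of the form
`𝒟(X₀, …, Xₙ; P, Q, R)` — the closed PSD cone intersected with a finite-dimensional real
subspace — under the continuous map reading `σ` off the blocks `(0,0)` and `(0,1)`. This map is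
proper on that cone: an entry of a PSD matrix is bounded by two diagonal entries, and the
diagonal of `𝒟` repeats the diagonal of `σ`; hence the image is closed. Additivity and
homogeneity come from the real-linearity of `𝒟` in `(X, P, Q, R)`, and `C_{n+1} ⊆ C_n` because
`𝒟` for `n` is a principal submatrix of `𝒟` for `n + 1`.
-/

open Topology

namespace Matrix

lemma dotProduct_mulVec_single_add_single {ι : Type*} [Fintype ι] [DecidableEq ι]
    (H : Matrix ι ι ℂ) (i j : ι) (c : ℂ) :
    star (Pi.single i 1 + Pi.single j c) ⬝ᵥ (H *ᵥ (Pi.single i 1 + Pi.single j c)) =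
      H i i + c * H i j + star c * H j i + star c * c * H j j := by
  simp only [star_add, mulVec_add, mulVec_single, dotProduct_add, add_dotProduct, Pi.star_single,
    star_one, MulOpposite.op_one, one_smul, single_dotProduct, col_apply, one_mul, RCLike.star_def,
    op_smul_eq_smul, dotProduct_smul, smul_eq_mul]
  ring

lemma PosSemidef.norm_apply_le {ι : Type*} [Fintype ι] [DecidableEq ι] {H : Matrix ι ι ℂ}
    (hH : H.PosSemidef) (i j : ι) : ‖H i j‖ ≤ (H i i).re + (H j j).re := by
  have key (c : ℂ) (hc : star c * c = 1) :
      0 ≤ (H i i).re + (H j j).re + 2 * (c * H i j).re := by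
    have h := (Complex.le_def.mp (hH.dotProduct_mulVec_nonneg (Pi.single i 1 + Pi.single j c))).1
    rw [dotProduct_mulVec_single_add_single, ← hH.1.apply j i, hc, ← star_mul'] at h
    simp only [Complex.add_re, Complex.zero_re, one_mul, Complex.star_def, Complex.conj_re] at h
    linarith
  have h₁ := key 1 (by simp)
  have h₂ := key (-1) (by simp)
  have h₃ := key Complex.I (by simp)
  have h₄ := key (-Complex.I) (by simp)
  simp only [one_mul, neg_mul, Complex.neg_re, Complex.I_mul_re] at h₁ h₂ h₃ h₄
  have hre : |(H i j).re| ≤ ((H i i).re + (H j j).re) / 2 := abs_le.mpr ⟨by linarith, by linarith⟩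
  have him : |(H i j).im| ≤ ((H i i).re + (H j j).re) / 2 := abs_le.mpr ⟨by linarith, by linarith⟩
  linarith [Complex.norm_le_abs_re_add_abs_im (H i j)]

lemma isClosed_setOf_posSemidef {ι : Type*} [Fintype ι] :
    IsClosed {H : Matrix ι ι ℂ | H.PosSemidef} := by
  have : {H : Matrix ι ι ℂ | H.PosSemidef} =
      {H | Hᴴ = H} ∩ ⋂ x : ι → ℂ, {H | 0 ≤ star x ⬝ᵥ (H *ᵥ x)} := by
    ext H; simp [posSemidef_iff_dotProduct_mulVec, IsHermitian]
  rw [this]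
  exact (isClosed_eq continuous_id.matrix_conjTranspose continuous_id).inter
    (isClosed_iInter fun x => isClosed_le continuous_const
      (continuous_const.dotProduct (continuous_id.matrix_mulVec continuous_const)))

lemma isCompact_setOf_forall_norm_apply_le {ι κ : Type*} (c : ℝ) :
    IsCompact {A : Matrix ι κ ℂ | ∀ i j, ‖A i j‖ ≤ c} := by
  have h := isCompact_univ_pi fun _ : ι => isCompact_univ_pi fun _ : κ =>
    isCompact_closedBall (0 : ℂ) c
  simp only [Set.pi, Set.mem_univ, Metric.mem_closedBall, dist_zero_right, forall_const] at h
  exact h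

end Matrix

theorem IsClosed.image_of_forall_nhds_isCompact {X Y : Type*} [TopologicalSpace X]
    [TopologicalSpace Y] [T2Space Y] {K : Set X} (hK : IsClosed K) {f : X → Y} (hf : Continuous f)
    (h : ∀ y, ∃ N ∈ 𝓝 y, ∃ C, IsCompact C ∧ K ∩ f ⁻¹' N ⊆ C) : IsClosed (f '' K) := by
  refine isClosed_of_closure_subset fun y hy => ?_
  obtain ⟨N, hN, C, hC, hKC⟩ := h y
  have hcl : IsClosed (f '' (K ∩ C)) := ((hC.inter_left hK).image hf).isClosed
  have : f '' K ∩ N ⊆ f '' (K ∩ C) := by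
    rintro _ ⟨⟨x, hx, rfl⟩, hxN⟩
    exact ⟨x, ⟨hx, hKC ⟨hx, hxN⟩⟩, rfl⟩
  have hy' : y ∈ closure (f '' K ∩ N) :=
    mem_closure_iff_frequently.mpr ((mem_closure_iff_frequently.mp hy).and_eventually hN)
  exact Set.image_mono Set.inter_subset_left (hcl.closure_subset_iff.mpr this hy')

section DMat

variable {M n : ℕ} {X Y : ℕ → Matrix (Fin M) (Fin M) ℂ}
  {P Q R P' Q' R' : Matrix (Fin M) (Fin M) ℂ}

lemma DEntry_add (k : ℕ) :
    DEntry M (X + Y) (P + P') (Q + Q') (R + R') k =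
      DEntry M X P Q R k + DEntry M Y P' Q' R' k := by
  ext (a | a) (b | b) <;> rcases k with _ | _ | k <;>
    simp [DEntry, conjTranspose_apply] <;> ring

lemma DEntry_smul (c : ℝ) (k : ℕ) :
    DEntry M (c • X) (c • P) (c • Q) (c • R) k = c • DEntry M X P Q R k := by
  ext (a | a) (b | b) <;> rcases k with _ | _ | k <;>
    simp [DEntry, conjTranspose_apply, Complex.real_smul] <;> ring

lemma DMat_add :
    DMat M n (X + Y) (P + P') (Q + Q') (R + R') = DMat M n X P Q R + DMat M n Y P' Q' R' := by
  ext p q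
  simp only [DMat, of_apply, DEntry_add, Matrix.add_apply, conjTranspose_add]
  split_ifs <;> rfl

lemma DMat_smul (c : ℝ) : DMat M n (c • X) (c • P) (c • Q) (c • R) = c • DMat M n X P Q R := by
  ext p q
  simp only [DMat, of_apply, DEntry_smul, Matrix.smul_apply, conjTranspose_smul, star_trivial]
  split_ifs <;> rfl

lemma DMat_apply_self (i : Fin (n + 1)) (u : Fin M ⊕ Fin M) :
    DMat M n X P Q R (i, u) (i, u) = fromBlocks P Q Qᴴ R u u := by
  rcases u with a | a <;> simp [DMat, DEntry]

lemma DMat_submatrix_zero :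
    (DMat M n X P Q R).submatrix (fun u => (0, u)) (fun u => (0, u)) =
      fromBlocks P (X 0) (-X 0) R := by
  ext (a | a) (b | b) <;> simp [DMat, DEntry]

lemma DMat_submatrix_castSucc :
    (DMat M (n + 1) X P Q R).submatrix (fun p => (p.1.castSucc, p.2))
      (fun p => (p.1.castSucc, p.2)) = DMat M n X P Q R := rfl

lemma isHermitian_fromBlocks_of_isHermitian_DMat (h : (DMat M n X P Q R).IsHermitian) :
    (fromBlocks P (X 0) (-X 0) R).IsHermitian :=
  DMat_submatrix_zero (n := n) ▸ h.submatrix _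

lemma isHermitian_of_mem_CSet {σ : Matrix (Fin M ⊕ Fin M) (Fin M ⊕ Fin M) ℂ}
    (hσ : σ ∈ CSet M n) : σ.IsHermitian := by
  obtain ⟨P, Q, R, X, rfl, -, hD⟩ := hσ
  obtain ⟨hP, -, -, hR⟩ :=
    isHermitian_fromBlocks_iff.mp (isHermitian_fromBlocks_of_isHermitian_DMat hD.1)
  exact isHermitian_fromBlocks_iff.mpr ⟨hP, rfl, conjTranspose_conjTranspose Q, hR⟩

lemma add_mem_CSet {σ₁ σ₂ : Matrix (Fin M ⊕ Fin M) (Fin M ⊕ Fin M) ℂ}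
    (h₁ : σ₁ ∈ CSet M n) (h₂ : σ₂ ∈ CSet M n) : σ₁ + σ₂ ∈ CSet M n := by
  obtain ⟨P, Q, R, X, rfl, hX, hD⟩ := h₁
  obtain ⟨P', Q', R', X', rfl, hX', hD'⟩ := h₂
  refine ⟨P + P', Q + Q', R + R', X + X', ?_, ?_, ?_⟩
  · rw [fromBlocks_add, conjTranspose_add]
  · rw [Pi.add_apply, conjTranspose_add, hX, hX', neg_add]
  · rw [DMat_add]
    exact hD.add hD'

lemma smul_mem_CSet {c : ℝ} (hc : 0 ≤ c) {σ : Matrix (Fin M ⊕ Fin M) (Fin M ⊕ Fin M) ℂ}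
    (hσ : σ ∈ CSet M n) : c • σ ∈ CSet M n := by
  obtain ⟨P, Q, R, X, rfl, hX, hD⟩ := hσ
  refine ⟨c • P, c • Q, c • R, c • X, ?_, ?_, ?_⟩
  · rw [fromBlocks_smul, conjTranspose_smul, star_trivial]
  · rw [Pi.smul_apply, conjTranspose_smul, star_trivial, hX, smul_neg]
  · rw [DMat_smul]
    exact hD.smul hc

lemma CSet_succ_subset : CSet M (n + 1) ⊆ CSet M n := by
  rintro _ ⟨P, Q, R, X, rfl, hX, hD⟩
  exact ⟨P, Q, R, X, rfl, hX, DMat_submatrix_castSucc ▸ hD.submatrix _⟩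

def DMatLinear (M n : ℕ) :
    ((ℕ → Matrix (Fin M) (Fin M) ℂ) × Matrix (Fin M) (Fin M) ℂ × Matrix (Fin M) (Fin M) ℂ ×
      Matrix (Fin M) (Fin M) ℂ) →ₗ[ℝ]
      Matrix (Fin (n + 1) × (Fin M ⊕ Fin M)) (Fin (n + 1) × (Fin M ⊕ Fin M)) ℂ where
  toFun v := DMat M n v.1 v.2.1 v.2.2.1 v.2.2.2
  map_add' _ _ := DMat_add
  map_smul' c _ := DMat_smul c

def sigmaOfDMat (M n : ℕ)
    (D : Matrix (Fin (n + 2) × (Fin M ⊕ Fin M)) (Fin (n + 2) × (Fin M ⊕ Fin M)) ℂ) :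
    Matrix (Fin M ⊕ Fin M) (Fin M ⊕ Fin M) ℂ :=
  -- The corners of the block `(0, 1)` are `Qᴴ/2 ∓ X₁ᴴ`, so their sum is `Qᴴ`.
  let Q := (D.submatrix (fun a => (0, .inl a)) (fun b => (1, .inr b)) +
    D.submatrix (fun a => (0, .inr a)) (fun b => (1, .inl b)))ᴴ
  fromBlocks (D.submatrix (fun a => (0, .inl a)) (fun b => (0, .inl b))) Q Qᴴ
    (D.submatrix (fun a => (0, .inr a)) (fun b => (0, .inr b)))

lemma continuous_sigmaOfDMat : Continuous (sigmaOfDMat M n) := by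
  unfold sigmaOfDMat
  fun_prop

lemma sigmaOfDMat_DMat (X : ℕ → Matrix (Fin M) (Fin M) ℂ) (P Q R : Matrix (Fin M) (Fin M) ℂ) :
    sigmaOfDMat M n (DMat M (n + 1) X P Q R) = fromBlocks P Q Qᴴ R := by
  ext (a | a) (b | b) <;> simp [sigmaOfDMat, DMat, DEntry] <;> ring

-- `X₀ᴴ = -X₀` need not be imposed: it follows from hermiticity of `DMat`.
def posSemidefDMats (M n : ℕ) :
    Set (Matrix (Fin (n + 1) × (Fin M ⊕ Fin M)) (Fin (n + 1) × (Fin M ⊕ Fin M)) ℂ) :=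
  {D | D.PosSemidef} ∩ LinearMap.range (DMatLinear M n)

lemma isClosed_posSemidefDMats : IsClosed (posSemidefDMats M n) :=
  Matrix.isClosed_setOf_posSemidef.inter (LinearMap.range _).closed_of_finiteDimensional

lemma CSet_succ_eq_image : CSet M (n + 1) = sigmaOfDMat M n '' posSemidefDMats M (n + 1) := by
  ext σ
  constructor
  · rintro ⟨P, Q, R, X, rfl, -, hD⟩
    exact ⟨_, ⟨hD, (X, P, Q, R), rfl⟩, sigmaOfDMat_DMat X P Q R⟩
  · rintro ⟨_, ⟨hD, ⟨X, P, Q, R⟩, rfl⟩, rfl⟩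
    exact ⟨P, Q, R, X, sigmaOfDMat_DMat X P Q R,
      (isHermitian_fromBlocks_iff.mp (isHermitian_fromBlocks_of_isHermitian_DMat hD.1)).2.1, hD⟩

lemma norm_apply_le_of_mem_posSemidefDMats {D} (hD : D ∈ posSemidefDMats M (n + 1))
    (p q : Fin (n + 2) × (Fin M ⊕ Fin M)) :
    ‖D p q‖ ≤ (sigmaOfDMat M n D p.2 p.2).re + (sigmaOfDMat M n D q.2 q.2).re := by
  obtain ⟨hpsd, ⟨X, P, Q, R⟩, rfl⟩ := hD
  have h := Matrix.PosSemidef.norm_apply_le (H := DMat M (n + 1) X P Q R) hpsd p q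
  rwa [DMat_apply_self, DMat_apply_self, ← sigmaOfDMat_DMat (n := n) X P Q R] at h

theorem isClosed_CSet_succ : IsClosed (CSet M (n + 1)) := by
  rw [CSet_succ_eq_image]
  refine isClosed_posSemidefDMats.image_of_forall_nhds_isCompact continuous_sigmaOfDMat fun σ => ?_
  set r := 1 + ∑ u, ‖σ u u‖
  refine ⟨{τ | ∀ u, ‖τ u u‖ < r}, ?_, _, Matrix.isCompact_setOf_forall_norm_apply_le (2 * r), ?_⟩
  · refine IsOpen.mem_nhds ?_ fun u => ?_
    · simp only [Set.ofPred_forall]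
      exact isOpen_iInter_of_finite fun u => isOpen_lt (by fun_prop) continuous_const
    · have := Finset.single_le_sum (fun v _ => norm_nonneg (σ v v)) (Finset.mem_univ u)
      linarith
  · rintro D ⟨hD, hDN⟩ p q
    have := norm_apply_le_of_mem_posSemidefDMats hD p q
    have := (Complex.re_le_norm _).trans (hDN p.2).le
    have := (Complex.re_le_norm _).trans (hDN q.2).le
    linarith

end DMat

theorem CSet_isClosed_convexCone_antitone_general (M n : ℕ) (hn : 1 ≤ n) :
    IsClosed (CSet M n) ∧
    (∀ σ ∈ CSet M n, σ.IsHermitian) ∧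
    (∀ σ₁ ∈ CSet M n, ∀ σ₂ ∈ CSet M n, σ₁ + σ₂ ∈ CSet M n) ∧
    (∀ c : ℝ, 0 ≤ c → ∀ σ ∈ CSet M n, (c : ℂ) • σ ∈ CSet M n) ∧
    CSet M (n + 1) ⊆ CSet M n := by
  obtain ⟨m, rfl⟩ := Nat.exists_eq_add_of_le' hn
  refine ⟨isClosed_CSet_succ, fun _ => isHermitian_of_mem_CSet,
    fun _ h₁ _ h₂ => add_mem_CSet h₁ h₂, fun c hc σ hσ => ?_, CSet_succ_subset⟩
  rw [Complex.coe_smul]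
  exact smul_mem_CSet hc hσ

/-- For every `M ≥ 1` and `n ≥ 1`, `C_n` is a closed convex cone in the real vector
space of Hermitian `2M × 2M` complex matrices, and `C_{n+1} ⊆ C_n`. -/
theorem CSet_isClosed_convexCone_antitone (M n : ℕ) (hM : 1 ≤ M) (hn : 1 ≤ n) :
    IsClosed (CSet M n) ∧
    (∀ σ ∈ CSet M n, σ.IsHermitian) ∧
    (∀ σ₁ ∈ CSet M n, ∀ σ₂ ∈ CSet M n, σ₁ + σ₂ ∈ CSet M n) ∧
    (∀ c : ℝ, 0 ≤ c → ∀ σ ∈ CSet M n, (c : ℂ) • σ ∈ CSet M n) ∧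
    CSet M (n + 1) ⊆ CSet M n :=
  CSet_isClosed_convexCone_antitone_general M n hn
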